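/- Let k be a field and let B be a subalgebra of a polynomial ring k[x₁, …, x_m] that is generated as a k-algebra by a set of monomials. Suppose f and g are monomials in k[x₁, …, x_m] such that fⁿ·g ∈ B for every n ≥ 1, while fⁿ ∉ B for every n ≥ 1. Then the ascending chain of ideals of B generated by {f·g}, {f·g, f²·g}, {f·g, f²·g, f³·g}, … is strictly increasing; in particular, B is not a noetherian ring. -/
import Mathlib

set_option maxHeartbeats 1000000
set_option synthInstance.maxHeartbeats 400000


/-- `p` is a monomial: a product of powers of the variables (with coefficient `1`). -/
def IsMonomial {k : Type} [Field k] {m : ℕ} (p : MvPolynomial (Fin m) k) : Prop :=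
  ∃ s : Fin m →₀ ℕ, p = MvPolynomial.monomial s 1

/-- Let `B` be a subalgebra of a polynomial ring `k[x₁, …, x_m]` generated as a
`k`-algebra by a set of monomials.  If `f` and `g` are monomials with `fⁿ·g ∈ B` for
every `n ≥ 1` while `fⁿ ∉ B` for every `n ≥ 1`, then the ascending chain of ideals of
`B` generated by `{f·g}`, `{f·g, f²·g}`, `{f·g, f²·g, f³·g}`, … is strictly
increasing; in particular `B` is not a noetherian ring. -/
theorem statement16 {k : Type} [Field k] {m : ℕ}
    (M : Set (MvPolynomial (Fin m) k)) (hM : ∀ p ∈ M, IsMonomial p)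
    (B : Subalgebra k (MvPolynomial (Fin m) k)) (hB : B = Algebra.adjoin k M)
    (f g : MvPolynomial (Fin m) k) (hf : IsMonomial f) (hg : IsMonomial g)
    (hfg : ∀ n : ℕ, 1 ≤ n → f ^ n * g ∈ B)
    (hfn : ∀ n : ℕ, 1 ≤ n → f ^ n ∉ B) :
    StrictMono (fun n : ℕ => Ideal.span
      {x : B | ∃ j : ℕ, j ≤ n ∧ (x : MvPolynomial (Fin m) k) = f ^ (j + 1) * g}) ∧
      ¬ IsNoetherianRing B := by
  classical
  obtain ⟨sf, hfeq⟩ := hf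
  obtain ⟨sg, hgeq⟩ := hg
  -- every element of the monoid closure of M is a monomial
  have hmonoid : ∀ p ∈ Submonoid.closure M, IsMonomial p := by
    intro p hp
    induction hp using Submonoid.closure_induction with
    | mem x hx => exact hM x hx
    | one => exact ⟨0, by simp⟩
    | mul x y _ _ hx hy =>
        obtain ⟨s, rfl⟩ := hx
        obtain ⟨t, rfl⟩ := hy
        exact ⟨s + t, by rw [MvPolynomial.monomial_mul, one_mul]⟩
  -- if a monomial occurs in some element of B, then that monomial lies in B
  have hcoeffB : ∀ c ∈ B, ∀ t : Fin m →₀ ℕ, MvPolynomial.coeff t c ≠ 0 →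
      (MvPolynomial.monomial t (1 : k)) ∈ B := by
    intro c hc t ht
    have hspan : c ∈ Submodule.span k ((Submonoid.closure M : Set (MvPolynomial (Fin m) k))) := by
      have : c ∈ Subalgebra.toSubmodule (Algebra.adjoin k M) := by rw [hB] at hc; exact hc
      rwa [Algebra.adjoin_eq_span] at this
    have key : ∃ p ∈ Submonoid.closure M, MvPolynomial.coeff t p ≠ 0 := by
      refine Submodule.span_induction
        (p := fun x _ => MvPolynomial.coeff t x ≠ 0 →
          ∃ p ∈ Submonoid.closure M, MvPolynomial.coeff t p ≠ 0)
        (fun x hx h => ⟨x, hx, h⟩) (by simp) ?_ ?_ hspan ht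
      · intro x y hx hy ihx ihy h
        by_cases hcx : MvPolynomial.coeff t x ≠ 0
        · exact ihx hcx
        · push_neg at hcx
          exact ihy (by simpa [MvPolynomial.coeff_add, hcx] using h)
      · intro a x hx ih h
        refine ih fun h0 => h ?_
        rw [MvPolynomial.coeff_smul, h0, smul_zero]
    obtain ⟨p, hp, hpt⟩ := key
    obtain ⟨s, rfl⟩ := hmonoid p hp
    have hst : s = t := by
      by_contra hne
      rw [MvPolynomial.coeff_monomial, if_neg hne] at hpt
      exact hpt rfl
    subst hst
    have hle : Submonoid.closure M ≤ B.toSubmonoid :=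
      Submonoid.closure_le.mpr (fun x hx => by rw [hB]; exact Algebra.subset_adjoin hx)
    exact hle hp
  -- main non-membership claim
  have hkey : ∀ n : ℕ, ∀ x : B, (x : MvPolynomial (Fin m) k) = f ^ (n + 2) * g →
      x ∉ Ideal.span {x : B | ∃ j : ℕ, j ≤ n ∧
        (x : MvPolynomial (Fin m) k) = f ^ (j + 1) * g} := by
    intro n x hx hmem
    obtain ⟨c, hsupp, hsum⟩ := Submodule.mem_span_set.mp hmem
    have hsum' : f ^ (n + 2) * g =
        ∑ i ∈ c.support, ((c i : MvPolynomial (Fin m) k)) * (i : MvPolynomial (Fin m) k) := by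
      have h1 := congrArg (B.val) hsum
      rw [map_finsuppSum] at h1
      simp only [smul_eq_mul, map_mul, Subalgebra.val_apply] at h1
      rw [← hx, ← h1]
      rfl
    set d : Fin m →₀ ℕ := (n + 2) • sf + sg with hd
    have hL : MvPolynomial.coeff d (f ^ (n + 2) * g) = 1 := by
      rw [hfeq, hgeq, MvPolynomial.monomial_pow, one_pow, MvPolynomial.monomial_mul, one_mul,
        MvPolynomial.coeff_monomial, if_pos rfl]
    have hne : ∑ i ∈ c.support,
        MvPolynomial.coeff d (((c i : MvPolynomial (Fin m) k)) * (i : MvPolynomial (Fin m) k))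
          ≠ 0 := by
      rw [← MvPolynomial.coeff_sum, ← hsum', hL]
      exact one_ne_zero
    obtain ⟨i, hi, hine⟩ := Finset.exists_ne_zero_of_sum_ne_zero hne
    obtain ⟨j, hj, hij⟩ := hsupp hi
    rw [hij, hfeq, hgeq, MvPolynomial.monomial_pow, one_pow, MvPolynomial.monomial_mul,
      one_mul, MvPolynomial.coeff_mul_monomial'] at hine
    set e : Fin m →₀ ℕ := (j + 1) • sf + sg with he
    have hle : e ≤ d := by
      intro y
      simp only [he, hd, Finsupp.add_apply, Finsupp.smul_apply, smul_eq_mul]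
      exact Nat.add_le_add_right (Nat.mul_le_mul_right _ (by omega)) _
    rw [if_pos hle, mul_one] at hine
    have hsub : d - e = (n + 1 - j) • sf := by
      ext y
      simp only [hd, he, Finsupp.tsub_apply, Finsupp.add_apply, Finsupp.smul_apply, smul_eq_mul]
      rw [Nat.add_sub_add_right, ← Nat.sub_mul]
      congr 1
      omega
    rw [hsub] at hine
    have hBmem : (MvPolynomial.monomial ((n + 1 - j) • sf) (1 : k)) ∈ B :=
      hcoeffB _ (c i).2 _ hine
    have : f ^ (n + 1 - j) ∈ B := by
      rwa [hfeq, MvPolynomial.monomial_pow, one_pow]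
    exact hfn (n + 1 - j) (by omega) this
  have hsm : StrictMono (fun n : ℕ => Ideal.span
      {x : B | ∃ j : ℕ, j ≤ n ∧ (x : MvPolynomial (Fin m) k) = f ^ (j + 1) * g}) := by
    apply strictMono_nat_of_lt_succ
    intro n
    have hle : Ideal.span {x : B | ∃ j : ℕ, j ≤ n ∧
          (x : MvPolynomial (Fin m) k) = f ^ (j + 1) * g} ≤
        Ideal.span {x : B | ∃ j : ℕ, j ≤ n + 1 ∧
          (x : MvPolynomial (Fin m) k) = f ^ (j + 1) * g} :=
      Ideal.span_mono (fun x ⟨j, hj, hxe⟩ => ⟨j, by omega, hxe⟩)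
    refine lt_of_le_of_ne hle fun h => ?_
    have hxB : f ^ (n + 2) * g ∈ B := hfg (n + 2) (by omega)
    have hxmem : (⟨f ^ (n + 2) * g, hxB⟩ : B) ∈ Ideal.span {x : B | ∃ j : ℕ, j ≤ n + 1 ∧
        (x : MvPolynomial (Fin m) k) = f ^ (j + 1) * g} :=
      Ideal.subset_span ⟨n + 1, le_refl _, rfl⟩
    rw [← h] at hxmem
    exact hkey n _ rfl hxmem
  refine ⟨hsm, fun hN => ?_⟩
  have hNB : IsNoetherian B B := isNoetherianRing_iff.mp hN
  obtain ⟨n0, hstab⟩ := monotone_stabilizes_iff_noetherian.mpr hNB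
    (⟨_, hsm.monotone⟩ : ℕ →o Ideal B)
  exact (hsm (Nat.lt_succ_self n0)).ne (hstab (n0 + 1) (Nat.le_succ n0))
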